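/- arXiv:math/0409272 — 2 statements merged into one kernel-verified Lean document; each statement's English description precedes it below -/
import Mathlib

section
/- Let D be a bounded domain in C^k and let u be a plurisubharmonic function on the unit disc Δ times D. If u(θ, z, w) = max{v(θ) - A, log|z|} where v is a bounded subharmonic function on Δ and A is large enough that u = log|z| near Δ × ∂_v D, then for each fixed θ the slice current dd^c u(θ,·,·) equals π₁^*(ν_r) where ν_r is the normalized Lebesgue measure on the circle {|z| = r} with r = exp(v(θ) - A). Consequently, the family of slice currents depends continuously on θ (in the weak topology) if and only if v is continuous. -/
/-!
STATEMENT 0.  The slice currents of `u(θ,z,w) = max (v θ - A) (log |z|)`.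

We work with the `z`-variable (the current `π₁^*(ν_r)` acts through the
`z`-variable only).  Subharmonicity is formalized through the
upper-semicontinuity + circle sub-mean value definition `PSHOn`.  The identity
`dd^c u(θ,·) = π₁^*(ν_r)` is expressed distributionally: pairing
`u(θ,·)` against the Laplacian of a test function equals `2π` times the
integral of the test function against the normalized Lebesgue measure `ν_r`
on the circle of radius `r = exp (v θ - A)`.  The second part is the
equivalence between weak continuity of the family of slices and continuity
of `v`.
-/

open MeasureTheory Metric Filter Set

noncomputable section

/-- Plurisubharmonicity (for `E = ℂ`: subharmonicity) on a subset of a complex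
normed space: upper semicontinuity together with the sub-mean value inequality
on circles inside every complex line. -/
def PSHOn {E : Type*} [NormedAddCommGroup E] [NormedSpace ℂ E]
    (ψ : E → ℝ) (s : Set E) : Prop :=
  UpperSemicontinuousOn ψ s ∧
    ∀ a ∈ s, ∀ d : E, ∀ ρ : ℝ, 0 < ρ →
      (∀ t : ℂ, ‖t‖ ≤ ρ → a + t • d ∈ s) →
      ψ a ≤ (2 * Real.pi)⁻¹ *
        ∫ θ in (0 : ℝ)..(2 * Real.pi), ψ (a + ((ρ : ℂ) * Complex.exp (θ * Complex.I)) • d)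

/-- The Laplacian of a real valued function on `ℂ ≅ ℝ²`. -/
def lap (φ : ℂ → ℝ) (z : ℂ) : ℝ :=
  fderiv ℝ (fun w => fderiv ℝ φ w 1) z 1 +
    fderiv ℝ (fun w => fderiv ℝ φ w Complex.I) z Complex.I

/-- The normalized Lebesgue (uniform) probability measure `ν_r` on the circle
of radius `r` centered at `0`. -/
def nuCircle (r : ℝ) : Measure ℂ :=
  (ENNReal.ofReal (2 * Real.pi))⁻¹ •
    (volume.restrict (Set.Ioc (0 : ℝ) (2 * Real.pi))).map (circleMap 0 r)

def eI (t : ℝ) : ℂ := Complex.exp (t * Complex.I)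
def pt (ρ t : ℝ) : ℂ := (ρ : ℂ) * eI t

lemma norm_eI (t : ℝ) : ‖eI t‖ = 1 := by
  simp [eI, Complex.norm_exp]

lemma norm_pt (ρ t : ℝ) : ‖pt ρ t‖ = |ρ| := by
  have := norm_eI t
  rw [pt, norm_mul, this, mul_one, Complex.norm_real, Real.norm_eq_abs]

lemma continuous_eI : Continuous eI := by
  unfold eI; continuity

lemma continuous_pt : Continuous fun q : ℝ × ℝ => pt q.1 q.2 := by
  unfold pt
  exact (Complex.continuous_ofReal.comp continuous_fst).mul (continuous_eI.comp continuous_snd)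

lemma hasDerivAt_pt_rho (t : ℝ) (ρ : ℝ) : HasDerivAt (fun ρ : ℝ => pt ρ t) (eI t) ρ := by
  have h : HasDerivAt (fun ρ : ℝ => (ρ : ℂ)) 1 ρ := by
    simpa using (hasDerivAt_id ρ).ofReal_comp
  simpa [pt] using h.mul_const (eI t)

lemma hasDerivAt_pt_t (ρ : ℝ) (t : ℝ) :
    HasDerivAt (fun t : ℝ => pt ρ t) ((ρ : ℂ) * eI t * Complex.I) t := by
  have h0 : HasDerivAt (fun t : ℝ => (t : ℂ)) 1 t := by
    simpa using (hasDerivAt_id t).ofReal_comp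
  have h : HasDerivAt (fun t : ℝ => (t : ℂ) * Complex.I) Complex.I t := by
    simpa using h0.mul_const Complex.I
  have h2 : HasDerivAt eI (eI t * Complex.I) t := by
    exact h.cexp
  have := h2.const_mul (ρ : ℂ)
  simpa [pt, mul_assoc] using this

lemma eI_pi_eq : eI Real.pi = eI (-Real.pi) := by
  simp [eI, Complex.exp_pi_mul_I, Complex.ofReal_neg, neg_mul, Complex.exp_neg,
    Complex.exp_pi_mul_I]

lemma key_deriv (h : ℂ → ℝ) (hh : ContDiff ℝ (⊤ : ℕ∞) h) (hcs : HasCompactSupport h)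
    (w : ℝ → ℝ) (hw : Continuous w) (ρ₀ : ℝ) :
    HasDerivAt (fun ρ : ℝ => ∫ t in (-Real.pi)..Real.pi, w t * h (pt ρ t))
      (∫ t in (-Real.pi)..Real.pi, w t * fderiv ℝ h (pt ρ₀ t) (eI t)) ρ₀ := by
  have hfd : ContDiff ℝ (⊤ : ℕ∞) (fderiv ℝ h) := hh.fderiv_right (by simp)
  obtain ⟨C, hC⟩ := hfd.continuous.bounded_above_of_compact_support (hcs.fderiv ℝ)
  have hcont : ∀ x : ℝ, Continuous fun t => w t * h (pt x t) := fun x =>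
    hw.mul (hh.continuous.comp ((Complex.continuous_ofReal.comp continuous_const).mul
      continuous_eI))
  have hcont' : ∀ x : ℝ, Continuous fun t => w t * fderiv ℝ h (pt x t) (eI t) := fun x =>
    hw.mul (Continuous.clm_apply (hfd.continuous.comp
      ((continuous_pt.comp (Continuous.prodMk_right x)))) continuous_eI)
  exact (intervalIntegral.hasDerivAt_integral_of_dominated_loc_of_deriv_le
    (F := fun x t => w t * h (pt x t))
    (F' := fun x t => w t * fderiv ℝ h (pt x t) (eI t))
    (bound := fun t => |w t| * C)
    (Metric.ball_mem_nhds ρ₀ zero_lt_one)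
    (Eventually.of_forall fun x => (hcont x).aestronglyMeasurable)
    ((hcont ρ₀).intervalIntegrable _ _)
    ((hcont' ρ₀).aestronglyMeasurable)
    (Eventually.of_forall fun t _ => fun x _ => by
      have : ‖fderiv ℝ h (pt x t) (eI t)‖ ≤ C := by
        calc ‖fderiv ℝ h (pt x t) (eI t)‖ ≤ ‖fderiv ℝ h (pt x t)‖ * ‖eI t‖ :=
              (fderiv ℝ h (pt x t)).le_opNorm _
        _ ≤ C := by rw [norm_eI, mul_one]; exact hC _
      calc ‖w t * fderiv ℝ h (pt x t) (eI t)‖ = |w t| * ‖fderiv ℝ h (pt x t) (eI t)‖ := by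
            rw [norm_mul]; rfl
      _ ≤ |w t| * C := by exact mul_le_mul_of_nonneg_left this (abs_nonneg _))
    ((hw.abs.mul continuous_const).intervalIntegrable _ _)
    (Eventually.of_forall fun t _ => fun x _ => by
      have hd : HasDerivAt (fun x : ℝ => h (pt x t)) (fderiv ℝ h (pt x t) (eI t)) x :=
        ((hh.differentiable (by simp)) (pt x t)).hasFDerivAt.comp_hasDerivAt x
          (hasDerivAt_pt_rho t x)
      exact hd.const_mul (w t))).2

section phi
variable {φ : ℂ → ℝ}

lemma fderiv_inner_apply' (hφ : ContDiff ℝ (⊤ : ℕ∞) φ) (z c d : ℂ) :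
    fderiv ℝ (fun w => fderiv ℝ φ w c) z d = fderiv ℝ (fderiv ℝ φ) z d c := by
  have hB : HasFDerivAt (fderiv ℝ φ) (fderiv ℝ (fderiv ℝ φ) z) z :=
    (((hφ.fderiv_right (m := (⊤ : ℕ∞)) (by simp)).differentiable (by simp)) z).hasFDerivAt
  have : HasFDerivAt (fun w => fderiv ℝ φ w c)
      ((ContinuousLinearMap.apply ℝ ℝ c).comp (fderiv ℝ (fderiv ℝ φ) z)) z :=
    (ContinuousLinearMap.apply ℝ ℝ c).hasFDerivAt.comp z hB
  rw [this.fderiv]; rfl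

lemma lap_eq' (hφ : ContDiff ℝ (⊤ : ℕ∞) φ) (z : ℂ) :
    (fderiv ℝ (fun w => fderiv ℝ φ w 1) z 1 + fderiv ℝ (fun w => fderiv ℝ φ w Complex.I) z Complex.I)
      = fderiv ℝ (fderiv ℝ φ) z 1 1 + fderiv ℝ (fderiv ℝ φ) z Complex.I Complex.I := by
  rw [fderiv_inner_apply' hφ, fderiv_inner_apply' hφ]

lemma eI_decomp (t : ℝ) : eI t = (Real.cos t) • (1 : ℂ) + (Real.sin t) • Complex.I := by
  simp [eI, Complex.exp_mul_I, Complex.real_smul, Complex.ofReal_cos, Complex.ofReal_sin]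

lemma I_mul_eI_decomp (t : ℝ) :
    eI t * Complex.I = (-Real.sin t) • (1 : ℂ) + (Real.cos t) • Complex.I := by
  rw [eI_decomp]
  simp only [Complex.real_smul, add_mul, one_mul, mul_assoc, Complex.I_mul_I,
    Complex.ofReal_neg]
  ring

lemma rot_identity (B : ℂ →L[ℝ] ℂ →L[ℝ] ℝ) (t : ℝ) :
    B (eI t) (eI t) + B (eI t * Complex.I) (eI t * Complex.I)
      = B 1 1 + B Complex.I Complex.I := by
  rw [I_mul_eI_decomp, eI_decomp]
  simp only [map_add, _root_.map_smul, ContinuousLinearMap.add_apply,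
    ContinuousLinearMap.smul_apply, smul_eq_mul]
  linear_combination ((B 1) 1 + (B Complex.I) Complex.I) * Real.sin_sq_add_cos_sq t

end phi

section phi2
variable {φ : ℂ → ℝ}

lemma fderiv_zero_nmem (hz : z ∉ tsupport φ) : fderiv ℝ φ z = 0 := by
  have h : φ =ᶠ[nhds z] 0 := by
    filter_upwards [(isClosed_tsupport φ).isOpen_compl.mem_nhds hz] with w hw
    exact image_eq_zero_of_notMem_tsupport hw
  rw [h.fderiv_eq]; exact fderiv_const_apply 0

lemma fderiv2_zero_nmem (hz : z ∉ tsupport φ) : fderiv ℝ (fderiv ℝ φ) z = 0 := by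
  have h : fderiv ℝ φ =ᶠ[nhds z] 0 := by
    filter_upwards [(isClosed_tsupport φ).isOpen_compl.mem_nhds hz] with w hw
    exact fderiv_zero_nmem hw
  rw [h.fderiv_eq]; exact fderiv_const_apply 0

end phi2

section FFF
variable (φ : ℂ → ℝ)

def Ff (ρ : ℝ) : ℝ := ∫ t in (-Real.pi)..Real.pi, φ (pt ρ t)
def F1 (ρ : ℝ) : ℝ := ∫ t in (-Real.pi)..Real.pi, fderiv ℝ φ (pt ρ t) (eI t)
def F2 (ρ : ℝ) : ℝ :=
  ∫ t in (-Real.pi)..Real.pi, fderiv ℝ (fderiv ℝ φ) (pt ρ t) (eI t) (eI t)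

variable {φ} (hφ : ContDiff ℝ (⊤ : ℕ∞) φ) (hcs : HasCompactSupport φ)
include hφ hcs

lemma hasDerivAt_Ff (ρ : ℝ) : HasDerivAt (Ff φ) (F1 φ ρ) ρ := by
  have := key_deriv φ hφ hcs (fun _ => 1) continuous_const ρ
  simp only [one_mul] at this
  exact this

lemma hasDerivAt_F1 (ρ : ℝ) : HasDerivAt (F1 φ) (F2 φ ρ) ρ := by
  have hfd : ContDiff ℝ (⊤ : ℕ∞) (fderiv ℝ φ) := hφ.fderiv_right (by simp)
  set h1 : ℂ → ℝ := fun z => fderiv ℝ φ z 1 with hh1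
  set h2 : ℂ → ℝ := fun z => fderiv ℝ φ z Complex.I with hh2
  have hc1 : ContDiff ℝ (⊤ : ℕ∞) h1 :=
    (ContinuousLinearMap.apply ℝ ℝ (1 : ℂ)).contDiff.comp hfd
  have hc2 : ContDiff ℝ (⊤ : ℕ∞) h2 :=
    (ContinuousLinearMap.apply ℝ ℝ Complex.I).contDiff.comp hfd
  have hs1 : HasCompactSupport h1 := (hcs.fderiv ℝ).comp_left (g := fun L : ℂ →L[ℝ] ℝ => L 1) rfl
  have hs2 : HasCompactSupport h2 :=
    (hcs.fderiv ℝ).comp_left (g := fun L : ℂ →L[ℝ] ℝ => L Complex.I) rfl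
  -- F1 = ∫ cos • h1 + sin • h2
  have hsplit : ∀ ρ : ℝ, F1 φ ρ =
      (∫ t in (-Real.pi)..Real.pi, Real.cos t * h1 (pt ρ t)) +
      (∫ t in (-Real.pi)..Real.pi, Real.sin t * h2 (pt ρ t)) := by
    intro ρ
    rw [F1, ← intervalIntegral.integral_add]
    · apply intervalIntegral.integral_congr
      intro t _
      show (fderiv ℝ φ (pt ρ t)) (eI t) = Real.cos t * h1 (pt ρ t) + Real.sin t * h2 (pt ρ t)
      rw [eI_decomp t]
      simp only [map_add, _root_.map_smul, smul_eq_mul, hh1, hh2]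
    · exact (Real.continuous_cos.mul ((((ContinuousLinearMap.apply ℝ ℝ (1:ℂ)).continuous).comp
        (hfd.continuous.comp
          (continuous_pt.comp (Continuous.prodMk_right ρ)))))).intervalIntegrable _ _
    · exact (Real.continuous_sin.mul ((((ContinuousLinearMap.apply ℝ ℝ Complex.I).continuous).comp
        (hfd.continuous.comp
          (continuous_pt.comp (Continuous.prodMk_right ρ)))))).intervalIntegrable _ _
  have hd1 := key_deriv h1 hc1 hs1 Real.cos Real.continuous_cos ρ
  have hd2 := key_deriv h2 hc2 hs2 Real.sin Real.continuous_sin ρ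
  have hD := hd1.add hd2
  have heq : (∫ t in (-Real.pi)..Real.pi, Real.cos t * fderiv ℝ h1 (pt ρ t) (eI t)) +
      (∫ t in (-Real.pi)..Real.pi, Real.sin t * fderiv ℝ h2 (pt ρ t) (eI t)) = F2 φ ρ := by
    rw [← intervalIntegral.integral_add]
    · apply intervalIntegral.integral_congr
      intro t _
      show Real.cos t * fderiv ℝ h1 (pt ρ t) (eI t) + Real.sin t * fderiv ℝ h2 (pt ρ t) (eI t)
        = fderiv ℝ (fderiv ℝ φ) (pt ρ t) (eI t) (eI t)
      have e1 : fderiv ℝ h1 (pt ρ t) (eI t) = fderiv ℝ (fderiv ℝ φ) (pt ρ t) (eI t) 1 :=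
        fderiv_inner_apply' hφ _ _ _
      have e2 : fderiv ℝ h2 (pt ρ t) (eI t) = fderiv ℝ (fderiv ℝ φ) (pt ρ t) (eI t) Complex.I :=
        fderiv_inner_apply' hφ _ _ _
      have expand : ∀ L : ℂ →L[ℝ] ℝ, L (eI t) = Real.cos t * L 1 + Real.sin t * L Complex.I := by
        intro L
        conv_lhs => rw [eI_decomp t]
        simp only [map_add, _root_.map_smul, smul_eq_mul]
      rw [e1, e2]
      exact (expand ((fderiv ℝ (fderiv ℝ φ) (pt ρ t)) (eI t))).symm
    · have hfd1 : ContDiff ℝ (⊤ : ℕ∞) (fderiv ℝ h1) := hc1.fderiv_right (by simp)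
      exact (Real.continuous_cos.mul (Continuous.clm_apply (hfd1.continuous.comp
        (continuous_pt.comp (Continuous.prodMk_right ρ))) continuous_eI)).intervalIntegrable _ _
    · have hfd2 : ContDiff ℝ (⊤ : ℕ∞) (fderiv ℝ h2) := hc2.fderiv_right (by simp)
      exact (Real.continuous_sin.mul (Continuous.clm_apply (hfd2.continuous.comp
        (continuous_pt.comp (Continuous.prodMk_right ρ))) continuous_eI)).intervalIntegrable _ _
  rw [show F2 φ ρ = _ from heq.symm]
  exact (hD.congr_of_eventuallyEq (Eventually.of_forall fun x => (hsplit x))).congr_deriv rfl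
end FFF


section FFF2
variable {φ : ℂ → ℝ} (hφ : ContDiff ℝ (⊤ : ℕ∞) φ) (hcs : HasCompactSupport φ)

def Gd (φ : ℂ → ℝ) (ρ : ℝ) : ℝ := F1 φ ρ + ρ * F2 φ ρ

include hφ in
lemma continuous_F2 : Continuous (F2 φ) := by
  have hfd2 : ContDiff ℝ (⊤ : ℕ∞) (fderiv ℝ (fderiv ℝ φ)) := (hφ.fderiv_right (m := (⊤ : ℕ∞)) (by simp)).fderiv_right (m := (⊤ : ℕ∞)) (by simp)
  have hc : Continuous (Function.uncurry
      fun (ρ t : ℝ) => fderiv ℝ (fderiv ℝ φ) (pt ρ t) (eI t) (eI t)) := by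
    apply Continuous.clm_apply
    · apply Continuous.clm_apply
      · exact hfd2.continuous.comp continuous_pt
      · exact continuous_eI.comp continuous_snd
    · exact continuous_eI.comp continuous_snd
  exact intervalIntegral.continuous_parametric_intervalIntegral_of_continuous' hc _ _

include hφ hcs in
lemma continuous_F1 : Continuous (F1 φ) :=
  continuous_iff_continuousAt.2 fun ρ => (hasDerivAt_F1 hφ hcs ρ).continuousAt

include hφ hcs in
lemma continuous_Gd : Continuous (Gd φ) :=
  (continuous_F1 hφ hcs).add (continuous_id.mul (continuous_F2 hφ))

include hφ hcs in
lemma hasDerivAt_G (ρ : ℝ) : HasDerivAt (fun ρ => ρ * F1 φ ρ) (Gd φ ρ) ρ := by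
  have := (hasDerivAt_id' ρ).mul (hasDerivAt_F1 hφ hcs ρ)
  exact this.congr_deriv (by rw [Gd]; ring)

include hφ in
lemma qf_hasDerivAt (ρ : ℝ) (t : ℝ) :
    HasDerivAt (fun t : ℝ => fderiv ℝ φ (pt ρ t) ((ρ:ℂ) * eI t * Complex.I))
      (fderiv ℝ (fderiv ℝ φ) (pt ρ t) ((ρ:ℂ) * eI t * Complex.I) ((ρ:ℂ) * eI t * Complex.I)
        + fderiv ℝ φ (pt ρ t) ((ρ:ℂ) * eI t * Complex.I * Complex.I)) t := by
  have hc : HasDerivAt (fun t => fderiv ℝ φ (pt ρ t))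
      ((fderiv ℝ (fderiv ℝ φ) (pt ρ t)) ((ρ:ℂ) * eI t * Complex.I)) t :=
    (((hφ.fderiv_right (m := (⊤ : ℕ∞)) (by simp)).differentiable (by simp)) (pt ρ t)).hasFDerivAt.comp_hasDerivAt t
      (hasDerivAt_pt_t ρ t)
  have hu : HasDerivAt (fun t => (ρ:ℂ) * eI t * Complex.I)
      ((ρ:ℂ) * eI t * Complex.I * Complex.I) t := (hasDerivAt_pt_t ρ t).mul_const Complex.I
  exact hc.clm_apply hu

include hφ in
lemma integral_qd_eq_zero (ρ : ℝ) :
    ∫ t in (-Real.pi)..Real.pi,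
      (fderiv ℝ (fderiv ℝ φ) (pt ρ t) ((ρ:ℂ) * eI t * Complex.I) ((ρ:ℂ) * eI t * Complex.I)
        + fderiv ℝ φ (pt ρ t) ((ρ:ℂ) * eI t * Complex.I * Complex.I)) = 0 := by
  have hfd : ContDiff ℝ (⊤ : ℕ∞) (fderiv ℝ φ) := hφ.fderiv_right (by simp)
  have hfd2 : ContDiff ℝ (⊤ : ℕ∞) (fderiv ℝ (fderiv ℝ φ)) := hfd.fderiv_right (by simp)
  have hdir : Continuous fun t : ℝ => (ρ:ℂ) * eI t * Complex.I :=
    ((continuous_const.mul continuous_eI).mul continuous_const)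
  have hcont : Continuous fun t : ℝ =>
      (fderiv ℝ (fderiv ℝ φ) (pt ρ t) ((ρ:ℂ) * eI t * Complex.I) ((ρ:ℂ) * eI t * Complex.I)
        + fderiv ℝ φ (pt ρ t) ((ρ:ℂ) * eI t * Complex.I * Complex.I)) := by
    apply Continuous.add
    · exact Continuous.clm_apply (Continuous.clm_apply
        (hfd2.continuous.comp (continuous_pt.comp (Continuous.prodMk_right ρ))) hdir) hdir
    · exact Continuous.clm_apply
        (hfd.continuous.comp (continuous_pt.comp (Continuous.prodMk_right ρ)))
        (hdir.mul continuous_const)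
  rw [intervalIntegral.integral_eq_sub_of_hasDerivAt
    (fun t _ => qf_hasDerivAt hφ ρ t) (hcont.intervalIntegrable _ _)]
  have hpt : pt ρ Real.pi = pt ρ (-Real.pi) := by rw [pt, pt, eI_pi_eq]
  rw [hpt, eI_pi_eq]
  ring

include hφ in
lemma pointwise_polar (ρ : ℝ) (hρ : ρ ≠ 0) (t : ℝ) :
    ρ * lap φ (pt ρ t) =
      (ρ * fderiv ℝ (fderiv ℝ φ) (pt ρ t) (eI t) (eI t) + fderiv ℝ φ (pt ρ t) (eI t))
        + ρ⁻¹ * (fderiv ℝ (fderiv ℝ φ) (pt ρ t) ((ρ:ℂ) * eI t * Complex.I)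
            ((ρ:ℂ) * eI t * Complex.I)
          + fderiv ℝ φ (pt ρ t) ((ρ:ℂ) * eI t * Complex.I * Complex.I)) := by
  have h1 : (ρ:ℂ) * eI t * Complex.I = ρ • (eI t * Complex.I) := by
    rw [Complex.real_smul]; ring
  have h2 : (ρ:ℂ) * eI t * Complex.I * Complex.I = ρ • (-(eI t)) := by
    rw [Complex.real_smul, mul_assoc, mul_assoc, Complex.I_mul_I]; ring
  rw [lap, lap_eq' hφ, h2, h1]
  have hrot := rot_identity (fderiv ℝ (fderiv ℝ φ) (pt ρ t)) t
  simp only [_root_.map_smul, map_neg, ContinuousLinearMap.smul_apply, smul_eq_mul,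
    ContinuousLinearMap.neg_apply]
  field_simp
  linear_combination (-ρ) * hrot

include hφ hcs in
lemma inner_integral (ρ : ℝ) (hρ : 0 < ρ) :
    ∫ t in (-Real.pi)..Real.pi, ρ * lap φ (pt ρ t) = Gd φ ρ := by
  have hfd : ContDiff ℝ (⊤ : ℕ∞) (fderiv ℝ φ) := hφ.fderiv_right (by simp)
  have hfd2 : ContDiff ℝ (⊤ : ℕ∞) (fderiv ℝ (fderiv ℝ φ)) := hfd.fderiv_right (by simp)
  have hdir : Continuous fun t : ℝ => (ρ:ℂ) * eI t * Complex.I :=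
    ((continuous_const.mul continuous_eI).mul continuous_const)
  have hcont1 : Continuous fun t : ℝ =>
      ρ * fderiv ℝ (fderiv ℝ φ) (pt ρ t) (eI t) (eI t) + fderiv ℝ φ (pt ρ t) (eI t) := by
    apply Continuous.add
    · exact continuous_const.mul (Continuous.clm_apply (Continuous.clm_apply
        (hfd2.continuous.comp (continuous_pt.comp (Continuous.prodMk_right ρ))) continuous_eI)
        continuous_eI)
    · exact Continuous.clm_apply
        (hfd.continuous.comp (continuous_pt.comp (Continuous.prodMk_right ρ))) continuous_eI
  have hcont2 : Continuous fun t : ℝ =>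
      (fderiv ℝ (fderiv ℝ φ) (pt ρ t) ((ρ:ℂ) * eI t * Complex.I) ((ρ:ℂ) * eI t * Complex.I)
        + fderiv ℝ φ (pt ρ t) ((ρ:ℂ) * eI t * Complex.I * Complex.I)) := by
    apply Continuous.add
    · exact Continuous.clm_apply (Continuous.clm_apply
        (hfd2.continuous.comp (continuous_pt.comp (Continuous.prodMk_right ρ))) hdir) hdir
    · exact Continuous.clm_apply
        (hfd.continuous.comp (continuous_pt.comp (Continuous.prodMk_right ρ)))
        (hdir.mul continuous_const)
  rw [intervalIntegral.integral_congr (g := fun t =>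
      (ρ * fderiv ℝ (fderiv ℝ φ) (pt ρ t) (eI t) (eI t) + fderiv ℝ φ (pt ρ t) (eI t))
        + ρ⁻¹ * (fderiv ℝ (fderiv ℝ φ) (pt ρ t) ((ρ:ℂ) * eI t * Complex.I)
            ((ρ:ℂ) * eI t * Complex.I)
          + fderiv ℝ φ (pt ρ t) ((ρ:ℂ) * eI t * Complex.I * Complex.I)))
    (fun t _ => pointwise_polar hφ ρ hρ.ne' t)]
  rw [intervalIntegral.integral_add (hcont1.intervalIntegrable _ _)
    ((hcont2.intervalIntegrable _ _).const_mul ρ⁻¹)]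
  rw [intervalIntegral.integral_const_mul, integral_qd_eq_zero hφ ρ, mul_zero, add_zero]
  have hcc : Continuous fun t : ℝ =>
      fderiv ℝ (fderiv ℝ φ) (pt ρ t) (eI t) (eI t) :=
    Continuous.clm_apply (Continuous.clm_apply
      (hfd2.continuous.comp (continuous_pt.comp (Continuous.prodMk_right ρ))) continuous_eI)
      continuous_eI
  have hc2 : Continuous fun t : ℝ => fderiv ℝ φ (pt ρ t) (eI t) :=
    Continuous.clm_apply
      (hfd.continuous.comp (continuous_pt.comp (Continuous.prodMk_right ρ))) continuous_eI
  rw [intervalIntegral.integral_add ((hcc.intervalIntegrable _ _).const_mul ρ)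
    (hc2.intervalIntegrable _ _), intervalIntegral.integral_const_mul]
  rw [Gd, F1, F2]
  ring

end FFF2

section main
variable {φ : ℂ → ℝ} (hφ : ContDiff ℝ (⊤ : ℕ∞) φ) (hcs : HasCompactSupport φ)

include hφ in
lemma continuous_lap : Continuous (lap φ) := by
  have hfd2 : ContDiff ℝ (⊤ : ℕ∞) (fderiv ℝ (fderiv ℝ φ)) := (hφ.fderiv_right (m := (⊤ : ℕ∞)) (by simp)).fderiv_right (m := (⊤ : ℕ∞)) (by simp)
  have he : lap φ = fun z =>
      fderiv ℝ (fderiv ℝ φ) z 1 1 + fderiv ℝ (fderiv ℝ φ) z Complex.I Complex.I := by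
    funext z; exact lap_eq' hφ z
  rw [he]
  exact ((hfd2.continuous.clm_apply continuous_const).clm_apply continuous_const).add
    ((hfd2.continuous.clm_apply continuous_const).clm_apply continuous_const)

lemma lap_zero_nmem {z : ℂ} (hz : z ∉ tsupport φ) : lap φ z = 0 := by
  have hmem := (isClosed_tsupport φ).isOpen_compl.mem_nhds hz
  have h1 : (fun w => fderiv ℝ φ w (1:ℂ)) =ᶠ[nhds z] (fun _ => (0:ℝ)) := by
    filter_upwards [hmem] with w hw
    rw [fderiv_zero_nmem hw]; rfl
  have h2 : (fun w => fderiv ℝ φ w Complex.I) =ᶠ[nhds z] (fun _ => (0:ℝ)) := by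
    filter_upwards [hmem] with w hw
    rw [fderiv_zero_nmem hw]; rfl
  rw [lap, h1.fderiv_eq, h2.fderiv_eq]
  simp

include hcs in
lemma hcs_lap : HasCompactSupport (lap φ) :=
  HasCompactSupport.intro hcs fun _ hx => lap_zero_nmem hx

variable (hsupp : tsupport φ ⊆ ball (0:ℂ) 1)

include hsupp in
lemma pt_nmem {ρ t : ℝ} (h : 1 ≤ ρ) : pt ρ t ∉ tsupport φ := by
  intro hmem
  have := hsupp hmem
  rw [mem_ball_zero_iff, norm_pt] at this
  have h2 : |ρ| < 1 := this
  rw [abs_of_pos (lt_of_lt_of_le one_pos h)] at h2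
  linarith

include hsupp in
lemma F1_zero {ρ : ℝ} (h : 1 ≤ ρ) : F1 φ ρ = 0 := by
  rw [F1, intervalIntegral.integral_congr (g := fun _ => (0:ℝ))
    (fun t _ => by rw [fderiv_zero_nmem (pt_nmem hsupp h)]; rfl)]
  simp

include hsupp in
lemma F2_zero {ρ : ℝ} (h : 1 ≤ ρ) : F2 φ ρ = 0 := by
  rw [F2, intervalIntegral.integral_congr (g := fun _ => (0:ℝ))
    (fun t _ => by rw [fderiv2_zero_nmem (pt_nmem hsupp h)]; rfl)]
  simp

include hsupp in
lemma Gd_zero {ρ : ℝ} (h : 1 ≤ ρ) : Gd φ ρ = 0 := by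
  rw [Gd, F1_zero hsupp h, F2_zero hsupp h]; ring

include hsupp in
lemma Ff_one : Ff φ 1 = 0 := by
  rw [Ff, intervalIntegral.integral_congr (g := fun _ => (0:ℝ))
    (fun t _ => image_eq_zero_of_notMem_tsupport (pt_nmem hsupp le_rfl))]
  simp

lemma polar_symm_eq (p : ℝ × ℝ) : Complex.polarCoord.symm p = pt p.1 p.2 := by
  simp [pt, eI, Complex.polarCoord_symm_apply, Complex.exp_mul_I, Complex.ext_iff]

end main

section mainid
variable {φ : ℂ → ℝ} (hφ : ContDiff ℝ (⊤ : ℕ∞) φ) (hcs : HasCompactSupport φ)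
  (hsupp : tsupport φ ⊆ ball (0:ℂ) 1)

include hφ hcs hsupp in
lemma main_id {r : ℝ} (hr0 : 0 < r) (hr1 : r < 1) :
    ∫ z : ℂ, max (Real.log r) (Real.log ‖z‖) * lap φ z = Ff φ r := by
  have hπ := Real.pi_pos
  have hlogr : Real.log r < 0 := Real.log_neg hr0 hr1
  set u : ℝ → ℝ := fun ρ => max (Real.log r) (Real.log ρ) with hu
  set g : ℝ × ℝ → ℝ := fun q => q.1 * (u q.1 * lap φ (pt q.1 q.2)) with hg
  -- Step 1 : polar coordinates
  have hpolar : ∫ z : ℂ, max (Real.log r) (Real.log ‖z‖) * lap φ z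
      = ∫ p in polarCoord.target, g p := by
    rw [← Complex.integral_comp_polarCoord_symm
      (fun z => max (Real.log r) (Real.log ‖z‖) * lap φ z)]
    apply setIntegral_congr_fun
    · rw [polarCoord_target]; exact measurableSet_Ioi.prod measurableSet_Ioo
    · intro p hp
      rw [polarCoord_target] at hp
      have hp1 : 0 < p.1 := hp.1
      show p.1 • (max (Real.log r) (Real.log ‖Complex.polarCoord.symm p‖)
          * lap φ (Complex.polarCoord.symm p)) = g p
      rw [polar_symm_eq, smul_eq_mul, hg, norm_pt, abs_of_pos hp1]
  rw [hpolar, polarCoord_target]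
  -- Step 2 : Fubini
  obtain ⟨CL, hCL⟩ := (continuous_lap hφ).bounded_above_of_compact_support (hcs_lap hcs)
  have hCL0 : 0 ≤ CL := le_trans (norm_nonneg _) (hCL 0)
  have hgmeas : Measurable g := by
    apply measurable_fst.mul
    apply Measurable.mul
    · exact (measurable_const.max (Real.measurable_log.comp measurable_fst))
    · exact ((continuous_lap hφ).comp continuous_pt).measurable
  have hubd : ∀ ρ : ℝ, 0 < ρ → ρ ≤ 1 → |u ρ| ≤ |Real.log r| := by
    intro ρ h0 h1
    have hle : u ρ ≤ 0 := max_le hlogr.le (Real.log_nonpos h0.le h1)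
    have hge : Real.log r ≤ u ρ := le_max_left _ _
    rw [abs_of_nonpos hle, abs_of_neg hlogr]
    linarith
  have hbound : ∀ q ∈ Ioi (0:ℝ) ×ˢ Ioo (-Real.pi) Real.pi,
      ‖g q‖ ≤ (Ioc (0:ℝ) 1 ×ˢ Ioo (-Real.pi) Real.pi).indicator
        (fun _ => |Real.log r| * CL) q := by
    rintro ⟨ρ, t⟩ hq
    have hρ : 0 < ρ := hq.1
    by_cases h1 : ρ ≤ 1
    · rw [indicator_of_mem (by exact ⟨⟨hρ, h1⟩, hq.2⟩)]
      have : ‖g (ρ, t)‖ = ρ * (|u ρ| * ‖lap φ (pt ρ t)‖) := by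
        simp only [hg, Real.norm_eq_abs, abs_mul, abs_of_pos hρ]
      rw [this]
      calc ρ * (|u ρ| * ‖lap φ (pt ρ t)‖) ≤ 1 * (|Real.log r| * CL) := by
            apply mul_le_mul h1 (mul_le_mul (hubd ρ hρ h1) (hCL _) (norm_nonneg _)
              (abs_nonneg _)) (by positivity) one_pos.le
      _ = |Real.log r| * CL := one_mul _
    · push_neg at h1
      have : lap φ (pt ρ t) = 0 := lap_zero_nmem (pt_nmem hsupp h1.le)
      rw [hg]
      simp only [this, mul_zero, norm_zero]
      exact indicator_nonneg (fun _ _ => by positivity) _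
  have hIset : MeasurableSet (Ioi (0:ℝ) ×ˢ Ioo (-Real.pi) Real.pi) :=
    measurableSet_Ioi.prod measurableSet_Ioo
  have hInd : Integrable ((Ioc (0:ℝ) 1 ×ˢ Ioo (-Real.pi) Real.pi).indicator
      (fun _ => |Real.log r| * CL)) (volume : Measure (ℝ × ℝ)) := by
    rw [integrable_indicator_iff (measurableSet_Ioc.prod measurableSet_Ioo)]
    apply (integrableOn_const_iff).2
    right
    rw [Measure.volume_eq_prod, Measure.prod_prod]
    exact ENNReal.mul_lt_top (by simp [Real.volume_Ioc]) (by simp [Real.volume_Ioo])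
  have hgint : IntegrableOn g (Ioi (0:ℝ) ×ˢ Ioo (-Real.pi) Real.pi) volume := by
    apply Integrable.mono' (hInd.restrict)
    · exact hgmeas.aestronglyMeasurable
    · exact (ae_restrict_iff' hIset).2 (Eventually.of_forall hbound)
  rw [Measure.volume_eq_prod] at hgint ⊢
  rw [setIntegral_prod _ hgint]
  -- Step 3 : inner integral
  have hinner : ∀ ρ ∈ Ioi (0:ℝ),
      ∫ t in Ioo (-Real.pi) Real.pi, g (ρ, t) = u ρ * Gd φ ρ := by
    intro ρ hρ
    rw [← integral_Ioc_eq_integral_Ioo, ← intervalIntegral.integral_of_le (by linarith)]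
    have : ∀ t, g (ρ, t) = u ρ * (ρ * lap φ (pt ρ t)) := by
      intro t; rw [hg]; ring
    rw [intervalIntegral.integral_congr (fun t _ => this t),
      intervalIntegral.integral_const_mul, inner_integral hφ hcs ρ hρ]
  rw [setIntegral_congr_fun measurableSet_Ioi hinner]
  -- Step 4 : reduce to (0,1]
  rw [setIntegral_eq_of_subset_of_ae_diff_eq_zero measurableSet_Ioi.nullMeasurableSet
    (fun x (hx : x ∈ Ioc (0:ℝ) 1) => hx.1)
    (Eventually.of_forall (fun ρ hρ => by
      have h1 : 1 < ρ := by
        rcases hρ with ⟨h0, hn⟩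
        by_contra hle
        push_neg at hle
        exact hn ⟨h0, hle⟩
      rw [Gd_zero hsupp h1.le, mul_zero]))]
  rw [← intervalIntegral.integral_of_le zero_le_one]
  -- Step 5 : one-dimensional computation
  have hGdc := continuous_Gd hφ hcs
  have hint1 : IntervalIntegrable (fun ρ => u ρ * Gd φ ρ) volume 0 r := by
    rw [intervalIntegrable_iff, uIoc_of_le hr0.le]
    apply IntegrableOn.congr_fun
      (f := fun ρ => Real.log r * Gd φ ρ)
      ((continuous_const.mul hGdc).integrableOn_Ioc) _ measurableSet_Ioc
    intro ρ hρ
    have : Real.log ρ ≤ Real.log r := Real.log_le_log hρ.1 hρ.2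
    rw [hu]; simp [max_eq_left this]
  have hint2 : IntervalIntegrable (fun ρ => u ρ * Gd φ ρ) volume r 1 := by
    rw [intervalIntegrable_iff, uIoc_of_le hr1.le]
    apply IntegrableOn.congr_fun (f := fun ρ => Real.log ρ * Gd φ ρ) _ _ measurableSet_Ioc
    · apply IntegrableOn.mono_set _ Ioc_subset_Icc_self
      apply ContinuousOn.integrableOn_Icc
      exact (Real.continuousOn_log.mono
        (fun x hx => by exact fun h0 => (by exact absurd (h0 ▸ hx.1) (by linarith) : False))).mul
        hGdc.continuousOn
    · intro ρ hρ
      have : Real.log r ≤ Real.log ρ := Real.log_le_log hr0 hρ.1.le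
      rw [hu]; simp [max_eq_right this]
  rw [← intervalIntegral.integral_add_adjacent_intervals hint1 hint2]
  -- first piece
  have hpiece1 : ∫ ρ in (0:ℝ)..r, u ρ * Gd φ ρ = Real.log r * (r * F1 φ r) := by
    rw [intervalIntegral.integral_congr_ae (g := fun ρ => Real.log r * Gd φ ρ)
      (Eventually.of_forall (fun ρ hρ => by
        rw [uIoc_of_le hr0.le] at hρ
        have : Real.log ρ ≤ Real.log r := Real.log_le_log hρ.1 hρ.2
        rw [hu]; simp [max_eq_left this]))]
    rw [intervalIntegral.integral_const_mul,
      intervalIntegral.integral_eq_sub_of_hasDerivAt (f := fun ρ => ρ * F1 φ ρ)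
        (fun x _ => hasDerivAt_G hφ hcs x) (hGdc.intervalIntegrable _ _)]
    simp
  -- second piece
  have hF1c := continuous_F1 hφ hcs
  have hpiece2 : ∫ ρ in r..(1:ℝ), u ρ * Gd φ ρ = -(Real.log r * (r * F1 φ r)) + Ff φ r := by
    rw [intervalIntegral.integral_congr (g := fun ρ => Real.log ρ * Gd φ ρ)
      (fun ρ hρ => by
        rw [uIcc_of_le hr1.le] at hρ
        have : Real.log r ≤ Real.log ρ := Real.log_le_log hr0 hρ.1
        rw [hu]; simp [max_eq_right this])]
    have hlogd : ∀ x ∈ uIcc r 1, HasDerivAt Real.log x⁻¹ x := by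
      intro x hx
      rw [uIcc_of_le hr1.le] at hx
      exact Real.hasDerivAt_log (by linarith [hx.1])
    rw [intervalIntegral.integral_mul_deriv_eq_deriv_mul hlogd
      (fun x _ => hasDerivAt_G hφ hcs x)
      ((ContinuousOn.intervalIntegrable (by
        apply ContinuousOn.inv₀ continuousOn_id
        intro x hx
        rw [uIcc_of_le hr1.le] at hx
        exact ne_of_gt (lt_of_lt_of_le hr0 hx.1))))
      (hGdc.intervalIntegrable _ _)]
    have hmid : ∫ x in r..(1:ℝ), x⁻¹ * (x * F1 φ x) = Ff φ 1 - Ff φ r := by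
      rw [intervalIntegral.integral_congr (g := fun x => F1 φ x) (fun x hx => by
        rw [uIcc_of_le hr1.le] at hx
        have hx0 : x ≠ 0 := ne_of_gt (by linarith [hx.1])
        field_simp)]
      exact intervalIntegral.integral_eq_sub_of_hasDerivAt
        (fun x _ => hasDerivAt_Ff hφ hcs x) (hF1c.intervalIntegrable _ _)
    rw [hmid, Ff_one hsupp, F1_zero hsupp le_rfl]
    simp
  rw [hpiece1, hpiece2]
  ring

end mainid

lemma integral_nuCircle (f : ℂ → ℝ) (hf : Continuous f) (r : ℝ) :
    ∫ z, f z ∂(nuCircle r)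
      = (2 * Real.pi)⁻¹ * ∫ t in (0:ℝ)..(2*Real.pi), f (circleMap 0 r t) := by
  have hπ := Real.pi_pos
  rw [nuCircle, integral_smul_measure,
    integral_map (continuous_circleMap 0 r).measurable.aemeasurable hf.aestronglyMeasurable,
    ENNReal.toReal_inv, ENNReal.toReal_ofReal (by positivity),
    intervalIntegral.integral_of_le (by positivity), smul_eq_mul]

lemma circleMap_eq_pt (r t : ℝ) : circleMap 0 r t = pt r t := by
  simp [circleMap, pt, eI]

lemma Ff_eq_circle (φ : ℂ → ℝ) (r : ℝ) :
    Ff φ r = ∫ t in (0:ℝ)..(2*Real.pi), φ (circleMap 0 r t) := by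
  have hper : Function.Periodic (fun t => φ (circleMap 0 r t)) (2*Real.pi) :=
    (periodic_circleMap 0 r).comp φ
  have h := hper.intervalIntegral_add_eq (-Real.pi) 0
  rw [show -Real.pi + 2*Real.pi = Real.pi by ring, zero_add] at h
  rw [← h, Ff]
  apply intervalIntegral.integral_congr
  intro t _
  show φ (pt r t) = φ (circleMap 0 r t)
  rw [circleMap_eq_pt]

lemma continuous_circle_param (φ : ℂ → ℝ) (hφc : Continuous φ) :
    Continuous fun r : ℝ => ∫ t in (0:ℝ)..(2*Real.pi), φ (circleMap 0 r t) := by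
  apply intervalIntegral.continuous_parametric_intervalIntegral_of_continuous'
  have : (Function.uncurry fun (r t : ℝ) => φ (circleMap 0 r t))
      = fun q : ℝ × ℝ => φ (pt q.1 q.2) := by
    funext q
    simp [Function.uncurry, circleMap_eq_pt]
  rw [this]
  exact hφc.comp continuous_pt

/-- for `u(θ,z) = max (v θ - A) (log |z|)` with `v` bounded
subharmonic on the unit disc and `A` large enough that `u = log |z|` near the
vertical boundary, every slice `dd^c u(θ,·)` is the pullback of the normalized
Lebesgue measure on the circle `{|z| = exp (v θ - A)}`; consequently the
family of slices is weakly continuous in `θ` iff `v` is continuous. -/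
theorem stmt_0
    (v : ℂ → ℝ) (A : ℝ)
    (hv : PSHOn v (ball (0 : ℂ) 1))
    (hbdd : ∃ K : ℝ, ∀ θ ∈ ball (0 : ℂ) 1, |v θ| ≤ K)
    (hA : ∃ s : ℝ, s < 1 ∧ ∀ θ ∈ ball (0 : ℂ) 1, Real.exp (v θ - A) < s) :
    (∀ θ ∈ ball (0 : ℂ) 1, ∀ φ : ℂ → ℝ, ContDiff ℝ (⊤ : ℕ∞) φ → HasCompactSupport φ →
        tsupport φ ⊆ ball (0 : ℂ) 1 →
        ∫ z : ℂ, max (v θ - A) (Real.log ‖z‖) * lap φ z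
          = 2 * Real.pi * ∫ z, φ z ∂(nuCircle (Real.exp (v θ - A)))) ∧
    ((∀ φ : ℂ → ℝ, Continuous φ →
        ContinuousOn (fun θ => ∫ z, φ z ∂(nuCircle (Real.exp (v θ - A)))) (ball (0 : ℂ) 1))
      ↔ ContinuousOn v (ball (0 : ℂ) 1)) := by
  have hπ := Real.pi_pos
  obtain ⟨K, hK⟩ := hbdd
  obtain ⟨s, hs1, hsA⟩ := hA
  constructor
  · intro θ hθ φ hφ hφcs hφsupp
    set r := Real.exp (v θ - A) with hrdef
    have hr0 : 0 < r := Real.exp_pos _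
    have hr1 : r < 1 := lt_trans (hsA θ hθ) hs1
    have hlog : Real.log r = v θ - A := Real.log_exp _
    have hmain := main_id hφ hφcs hφsupp hr0 hr1
    calc ∫ z : ℂ, max (v θ - A) (Real.log ‖z‖) * lap φ z
        = ∫ z : ℂ, max (Real.log r) (Real.log ‖z‖) * lap φ z := by rw [hlog]
      _ = Ff φ r := hmain
      _ = ∫ t in (0:ℝ)..(2*Real.pi), φ (circleMap 0 r t) := Ff_eq_circle φ r
      _ = 2 * Real.pi * ∫ z, φ z ∂(nuCircle r) := by
          rw [integral_nuCircle φ hφ.continuous r, ← mul_assoc,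
            mul_inv_cancel₀ (by positivity), one_mul]
  · constructor
    · intro H
      set ε := Real.exp (-K - A) with hε
      have hεpos : 0 < ε := Real.exp_pos _
      set ψ : ℂ → ℝ := fun z => Real.log (max ‖z‖ ε) with hψ
      have hψc : Continuous ψ :=
        (continuous_norm.max continuous_const).log
          (fun z => ne_of_gt (lt_of_lt_of_le hεpos (le_max_right _ _)))
      have hval : ∀ θ ∈ ball (0:ℂ) 1,
          ∫ z, ψ z ∂(nuCircle (Real.exp (v θ - A))) = v θ - A := by
        intro θ hθ
        set r := Real.exp (v θ - A) with hrdef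
        have hr0 : 0 < r := Real.exp_pos _
        have hεr : ε ≤ r := Real.exp_le_exp.2 (by
          have := abs_le.1 (hK θ hθ)
          linarith [this.1])
        rw [integral_nuCircle ψ hψc r]
        have : ∀ t ∈ uIcc (0:ℝ) (2*Real.pi), ψ (circleMap 0 r t) = v θ - A := by
          intro t _
          have hnorm : ‖circleMap 0 r t‖ = r := by
            rw [norm_circleMap_zero, abs_of_pos hr0]
          rw [hψ]
          show Real.log (max ‖circleMap 0 r t‖ ε) = v θ - A
          rw [hnorm, max_eq_left hεr, hrdef, Real.log_exp]
        rw [intervalIntegral.integral_congr this, intervalIntegral.integral_const,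
          smul_eq_mul, sub_zero, ← mul_assoc, inv_mul_cancel₀ (by positivity), one_mul]
      have hcont := (H ψ hψc).add (continuousOn_const (c := A))
      apply hcont.congr
      intro θ hθ
      show v θ = ∫ z, ψ z ∂(nuCircle (Real.exp (v θ - A))) + A
      rw [hval θ hθ]
      ring
    · intro hvc φ hφc
      have heq : (fun θ => ∫ z, φ z ∂(nuCircle (Real.exp (v θ - A))))
          = fun θ => (2*Real.pi)⁻¹ *
              ∫ t in (0:ℝ)..(2*Real.pi), φ (circleMap 0 (Real.exp (v θ - A)) t) :=
        funext fun θ => integral_nuCircle φ hφc _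
      rw [heq]
      exact continuousOn_const.mul ((continuous_circle_param φ hφc).comp_continuousOn
        (Real.continuous_exp.comp_continuousOn (hvc.sub continuousOn_const)))
end
end

section
/- Let μ be an f-invariant Borel probability measure on a compact metric space K with f : K → K a homeomorphism. Suppose that for all continuous functions φ, ψ : K → R belonging to a cone C closed under addition of constants and such that C - C is dense in C⁰(K), one has limsup_{m→∞} ∫ (φ∘f^m)(ψ∘f^{-m}) dμ ≤ (∫ φ dμ)(∫ ψ dμ) whenever the 'product condition' holds: the function φ(x)ψ(y) on K×K lies in the corresponding product cone. If this limsup inequality holds both for (φ + A)(ψ + A) and for (φ - A)(-ψ + A) for all large constants A > 0, then lim_{m→∞} ∫ (φ∘f^m)(ψ∘f^{-m}) dμ = (∫ φ dμ)(∫ ψ dμ), i.e. μ is mixing on the cone C - C, hence mixing. -/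
/-!
STATEMENT 11.  Abstract mixing criterion: if the one-sided `limsup`
inequalities hold for the products `(φ∘f^m + A)(ψ∘f^{-m} + A)` and
`(φ∘f^m - A)(-ψ∘f^{-m} + A)` for all large constants `A`, then the invariant
probability measure `μ` satisfies the mixing identity
`∫ (φ∘f^m)(ψ∘f^{-m}) dμ → (∫φ dμ)(∫ψ dμ)`.
-/

open MeasureTheory Filter

theorem stmt_11 {K : Type*} [MetricSpace K] [CompactSpace K]
    [MeasurableSpace K] [BorelSpace K]
    (f : K ≃ₜ K) (μ : Measure K) [IsProbabilityMeasure μ]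
    (hinv : MeasurePreserving (⇑f) μ μ)
    (φ ψ : K → ℝ) (hφ : Continuous φ) (hψ : Continuous ψ)
    (H : ∃ A₀ : ℝ, ∀ A : ℝ, A₀ ≤ A →
      (Filter.limsup
          (fun m : ℕ => ∫ x, (φ ((⇑f)^[m] x) + A) * (ψ ((⇑f.symm)^[m] x) + A) ∂μ) atTop
        ≤ (∫ x, (φ x + A) ∂μ) * (∫ x, (ψ x + A) ∂μ)) ∧
      (Filter.limsup
          (fun m : ℕ => ∫ x, (φ ((⇑f)^[m] x) - A) * (-ψ ((⇑f.symm)^[m] x) + A) ∂μ) atTop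
        ≤ (∫ x, (φ x - A) ∂μ) * (∫ x, (-ψ x + A) ∂μ))) :
    Tendsto (fun m : ℕ => ∫ x, φ ((⇑f)^[m] x) * ψ ((⇑f.symm)^[m] x) ∂μ) atTop
      (nhds ((∫ x, φ x ∂μ) * (∫ x, ψ x ∂μ))) := by
  have hK : Nonempty K := by
    rcases isEmpty_or_nonempty K with h | h
    · have h1 := measure_univ (μ := μ)
      rw [Set.univ_eq_empty_iff.2 h] at h1
      simp at h1
    · exact h
  -- integrability of continuous functions
  have hint : ∀ g : K → ℝ, Continuous g → Integrable g μ := by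
    intro g hg
    exact hg.integrable_of_hasCompactSupport
      (IsCompact.of_isClosed_subset isCompact_univ (isClosed_tsupport g) (Set.subset_univ _))
  -- invariance of integrals under iterates
  have hinv' : MeasurePreserving (⇑f.symm) μ μ := by
    have h1 : MeasurePreserving (⇑f.toMeasurableEquiv) μ μ := by
      simpa using hinv
    have h2 := h1.symm f.toMeasurableEquiv
    simpa using h2
  have key : ∀ (g : K → ℝ), Continuous g → ∀ m : ℕ,
      ∫ x, g ((⇑f)^[m] x) ∂μ = ∫ x, g x ∂μ := by
    intro g hg m
    induction m with
    | zero => simp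
    | succ n ih =>
      have h3 : ∀ x, g ((⇑f)^[n+1] x) = (fun y => g ((⇑f)^[n] y)) (f x) := by
        intro x; rw [Function.iterate_succ_apply]
      simp only [h3]
      rw [hinv.integral_comp f.measurableEmbedding (fun y => g ((⇑f)^[n] y))]
      exact ih
  have key' : ∀ (g : K → ℝ), Continuous g → ∀ m : ℕ,
      ∫ x, g ((⇑f.symm)^[m] x) ∂μ = ∫ x, g x ∂μ := by
    intro g hg m
    induction m with
    | zero => simp
    | succ n ih =>
      have h3 : ∀ x, g ((⇑f.symm)^[n+1] x) = (fun y => g ((⇑f.symm)^[n] y)) (f.symm x) := by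
        intro x; rw [Function.iterate_succ_apply]
      simp only [h3]
      rw [hinv'.integral_comp f.symm.measurableEmbedding (fun y => g ((⇑f.symm)^[n] y))]
      exact ih
  set I := ∫ x, φ x ∂μ with hI
  set J := ∫ x, ψ x ∂μ with hJ
  set u : ℕ → ℝ := fun m => ∫ x, φ ((⇑f)^[m] x) * ψ ((⇑f.symm)^[m] x) ∂μ with hu
  -- bounds
  obtain ⟨x₀, -, hx₀⟩ := isCompact_univ.exists_isMaxOn Set.univ_nonempty
    ((hφ.abs).continuousOn (s := Set.univ))
  obtain ⟨y₀, -, hy₀⟩ := isCompact_univ.exists_isMaxOn Set.univ_nonempty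
    ((hψ.abs).continuousOn (s := Set.univ))
  set Cφ := |φ x₀|
  set Cψ := |ψ y₀|
  have hCφ : ∀ x, |φ x| ≤ Cφ := fun x => hx₀ (Set.mem_univ x)
  have hCψ : ∀ x, |ψ x| ≤ Cψ := fun x => hy₀ (Set.mem_univ x)
  have hCφ0 : 0 ≤ Cφ := abs_nonneg _
  have hCψ0 : 0 ≤ Cψ := abs_nonneg _
  have hub : ∀ m, |u m| ≤ Cφ * Cψ := by
    intro m
    calc |u m| = ‖∫ x, φ ((⇑f)^[m] x) * ψ ((⇑f.symm)^[m] x) ∂μ‖ := rfl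
    _ ≤ Cφ * Cψ := by
        refine (norm_integral_le_of_norm_le_const (C := Cφ * Cψ) ?_).trans ?_
        · filter_upwards with x
          calc ‖φ ((⇑f)^[m] x) * ψ ((⇑f.symm)^[m] x)‖
              = |φ ((⇑f)^[m] x)| * |ψ ((⇑f.symm)^[m] x)| := abs_mul _ _
          _ ≤ Cφ * Cψ := mul_le_mul (hCφ _) (hCψ _) (abs_nonneg _) hCφ0
        · simp [measure_univ]
  have hbdd_above : IsBoundedUnder (· ≤ ·) atTop u :=
    isBoundedUnder_of ⟨Cφ * Cψ, fun m => (le_abs_self _).trans (hub m)⟩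
  have hbdd_below : IsBoundedUnder (· ≥ ·) atTop u :=
    isBoundedUnder_of ⟨-(Cφ * Cψ), fun m => neg_le_of_abs_le (hub m)⟩
  have hcobdd : IsCoboundedUnder (· ≤ ·) atTop u := hbdd_below.isCoboundedUnder_flip
  have hcobdd' : IsCoboundedUnder (· ≥ ·) atTop u := hbdd_above.isCoboundedUnder_flip
  obtain ⟨A₀, hA⟩ := H
  set A : ℝ := max A₀ 1 with hAdef
  obtain ⟨h1, h2⟩ := hA A (le_max_left _ _)
  -- continuity of iterates
  have hcφ : ∀ m : ℕ, Continuous fun x => φ ((⇑f)^[m] x) := fun m =>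
    hφ.comp (f.continuous.iterate m)
  have hcψ : ∀ m : ℕ, Continuous fun x => ψ ((⇑f.symm)^[m] x) := fun m =>
    hψ.comp (f.symm.continuous.iterate m)
  -- expansion identities
  have sc : (∫ (_ : K), A ^ 2 ∂μ) = A ^ 2 := by simp [measure_univ]
  have e1 : ∀ m : ℕ, ∫ x, (φ ((⇑f)^[m] x) + A) * (ψ ((⇑f.symm)^[m] x) + A) ∂μ
      = u m + (A * J + A * I + A ^ 2) := by
    intro m
    have hiP : Integrable (fun x => φ ((⇑f)^[m] x) * ψ ((⇑f.symm)^[m] x)) μ :=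
      hint _ ((hcφ m).mul (hcψ m))
    have hiR : Integrable (fun x => A * ψ ((⇑f.symm)^[m] x) + (A * φ ((⇑f)^[m] x) + A ^ 2)) μ :=
      hint _ ((continuous_const.mul (hcψ m)).add
        ((continuous_const.mul (hcφ m)).add continuous_const))
    have hiR2 : Integrable (fun x => A * φ ((⇑f)^[m] x) + A ^ 2) μ :=
      hint _ ((continuous_const.mul (hcφ m)).add continuous_const)
    have hrw : (fun x => (φ ((⇑f)^[m] x) + A) * (ψ ((⇑f.symm)^[m] x) + A))
        = fun x => φ ((⇑f)^[m] x) * ψ ((⇑f.symm)^[m] x)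
          + (A * ψ ((⇑f.symm)^[m] x) + (A * φ ((⇑f)^[m] x) + A ^ 2)) := by
      funext x; ring
    rw [hrw, integral_add hiP hiR,
      integral_add ((hint _ (hcψ m)).const_mul A) hiR2,
      integral_add ((hint _ (hcφ m)).const_mul A) (integrable_const _),
      integral_const_mul, integral_const_mul, sc, key φ hφ m, key' ψ hψ m]
    ring
  have e2 : ∀ m : ℕ, ∫ x, (φ ((⇑f)^[m] x) - A) * (-ψ ((⇑f.symm)^[m] x) + A) ∂μ
      = -u m + (A * J + A * I - A ^ 2) := by
    intro m
    have hiP : Integrable (fun x => -(φ ((⇑f)^[m] x) * ψ ((⇑f.symm)^[m] x))) μ :=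
      hint _ ((hcφ m).mul (hcψ m)).neg
    have hiR : Integrable (fun x => A * ψ ((⇑f.symm)^[m] x) + (A * φ ((⇑f)^[m] x) + -A ^ 2)) μ :=
      hint _ ((continuous_const.mul (hcψ m)).add
        ((continuous_const.mul (hcφ m)).add continuous_const))
    have hiR2 : Integrable (fun x => A * φ ((⇑f)^[m] x) + -A ^ 2) μ :=
      hint _ ((continuous_const.mul (hcφ m)).add continuous_const)
    have hrw : (fun x => (φ ((⇑f)^[m] x) - A) * (-ψ ((⇑f.symm)^[m] x) + A))
        = fun x => -(φ ((⇑f)^[m] x) * ψ ((⇑f.symm)^[m] x))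
          + (A * ψ ((⇑f.symm)^[m] x) + (A * φ ((⇑f)^[m] x) + -A ^ 2)) := by
      funext x; ring
    rw [hrw, integral_add hiP hiR,
      integral_add ((hint _ (hcψ m)).const_mul A) hiR2,
      integral_add ((hint _ (hcφ m)).const_mul A) (integrable_const _),
      integral_const_mul, integral_const_mul, integral_neg,
      key φ hφ m, key' ψ hψ m]
    simp only [integral_const, measure_univ, probReal_univ, ENNReal.toReal_one, smul_eq_mul, one_mul]
    ring
  -- right-hand sides
  have r1 : (∫ x, (φ x + A) ∂μ) * (∫ x, (ψ x + A) ∂μ) = I * J + (A * J + A * I + A ^ 2) := by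
    rw [integral_add (hint φ hφ) (integrable_const _),
      integral_add (hint ψ hψ) (integrable_const _), integral_const]
    simp [measure_univ]
    ring
  have r2 : (∫ x, (φ x - A) ∂μ) * (∫ x, (-ψ x + A) ∂μ) = -(I * J) + (A * J + A * I - A ^ 2) := by
    rw [integral_sub (hint φ hφ) (integrable_const _),
      integral_add (hint (fun x => -ψ x) hψ.neg) (integrable_const _), integral_neg, integral_const]
    simp [measure_univ]
    ring
  -- derive limsup bound
  simp only [e1, r1] at h1
  rw [limsup_add_const atTop u _ hbdd_above hcobdd] at h1
  have hsup : limsup u atTop ≤ I * J := by linarith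
  -- derive liminf bound
  simp only [e2, r2] at h2
  have hbdd_above' : IsBoundedUnder (· ≤ ·) atTop (fun m => -u m) :=
    isBoundedUnder_of ⟨Cφ * Cψ, fun m => (neg_le_abs _).trans (hub m)⟩
  have hcobdd'' : IsCoboundedUnder (· ≤ ·) atTop (fun m => -u m) :=
    IsBoundedUnder.isCoboundedUnder_flip
      (isBoundedUnder_of ⟨-(Cφ * Cψ), fun m => by
        have h5 := hub m
        rw [abs_le] at h5
        simpa using h5.2⟩)
  rw [limsup_add_const atTop (fun m => -u m) _ hbdd_above' hcobdd''] at h2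
  have hneg : limsup (fun m => -u m) atTop = -(liminf u atTop) := by
    have hanti : Antitone (fun x : ℝ => -x) := fun a b h => neg_le_neg h
    have h4 := hanti.map_liminf_of_continuousAt (F := atTop) u
      (continuous_neg.continuousAt) hcobdd' hbdd_below
    exact h4.symm
  have hinf : I * J ≤ liminf u atTop := by
    rw [hneg] at h2
    linarith
  exact tendsto_of_le_liminf_of_limsup_le hinf hsup hbdd_above hbdd_below
end
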